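/- Let G : ℝ^N → ℝ be twice continuously differentiable, γ > 0, define F : ℝ^N × ℝ^N → ℝ^N × ℝ^N by F(u, v) = (−v, γv + ∇G(u)), and for λ ≥ 0 define E_λ(u, v) = ½‖v‖² + G(u) + λ⟨∇G(u), v⟩. Then for every R > 0 there exists λ₀ > 0 with the following properties: (1) for every λ ∈ (0, λ₀) there exists α > 0 such that ⟨∇E_λ(u, v), F(u, v)⟩ ≥ α·‖∇E_λ(u, v)‖·‖F(u, v)‖ for all (u, v) ∈ B̄(0, R) × ℝ^N; (2) for every λ ∈ [0, λ₀), the set of points (u, v) ∈ B̄(0, R) × ℝ^N with ∇E_λ(u, v) = 0 coincides with the set of points (u, v) ∈ B̄(0, R) × ℝ^N with F(u, v) = 0. -/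

import Mathlib

open Real Set Metric Filter Topology RealInnerProductSpace

noncomputable section

/-- The vector field `F(u, v) = (-v, γ v + ∇G(u))` associated with the damped second order
system `u'' + γ u' + ∇G(u) = 0`, in the phase space `ℝ^N × ℝ^N`. -/
def Fvec {N : ℕ} (G : EuclideanSpace ℝ (Fin N) → ℝ) (γ : ℝ)
    (u v : EuclideanSpace ℝ (Fin N)) :
    EuclideanSpace ℝ (Fin N) × EuclideanSpace ℝ (Fin N) :=
  (-v, γ • v + gradient G u)

def Elam {N : ℕ} (G : EuclideanSpace ℝ (Fin N) → ℝ) (lam : ℝ)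
    (u v : EuclideanSpace ℝ (Fin N)) : ℝ :=
  (1 / 2) * ‖v‖ ^ 2 + G u + lam * ⟪gradient G u, v⟫

/-- The full gradient of `E_λ` at `(u, v)` with respect to the product Euclidean inner
product: `∇E_λ(u, v) = (∇G(u) + λ∇²G(u)v, v + λ∇G(u))`. -/
def gradElam {N : ℕ} (G : EuclideanSpace ℝ (Fin N) → ℝ) (lam : ℝ)
    (u v : EuclideanSpace ℝ (Fin N)) :
    EuclideanSpace ℝ (Fin N) × EuclideanSpace ℝ (Fin N) :=
  (gradient G u + lam • (fderiv ℝ (gradient G) u v), v + lam • gradient G u)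

def pinner {N : ℕ}
    (p q : EuclideanSpace ℝ (Fin N) × EuclideanSpace ℝ (Fin N)) : ℝ :=
  ⟪p.1, q.1⟫ + ⟪p.2, q.2⟫

def pnorm {N : ℕ} (p : EuclideanSpace ℝ (Fin N) × EuclideanSpace ℝ (Fin N)) : ℝ :=
  Real.sqrt (‖p.1‖ ^ 2 + ‖p.2‖ ^ 2)

/-!
Write `g = ∇G(u)` and `A = ∇²G(u)`. Then
`⟨∇E_λ, F⟩ = γ‖v‖² + λ‖g‖² - λ⟨Av, v⟩ + λγ⟨g, v⟩`, and once `λ (2‖A‖ + γ²) ≤ γ`, completing the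
square `λ/2 (‖g‖ - γ‖v‖)² ≥ 0` shows that this is at least `γ/2 ‖v‖² + λ/2 ‖g‖²`. Since `‖A‖` is
bounded on the compact ball, a single `λ₀` works there. Both `‖∇E_λ‖` and `‖F‖` are at most
constant multiples of `‖g‖ + ‖v‖`, which gives the angle condition (1); and a critical point of
`E_λ` makes `⟨∇E_λ, F⟩` vanish, forcing `v = 0` and then `g = 0`, which gives (2).
-/

section Gradient

variable {F : Type*} [NormedAddCommGroup F] [InnerProductSpace ℝ F] [CompleteSpace F]

theorem contDiff_gradient {f : F → ℝ} {n : WithTop ℕ∞} (hf : ContDiff ℝ (n + 1) f) :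
    ContDiff ℝ n (gradient f) :=
  (InnerProductSpace.toDual ℝ F).symm.contDiff.comp (hf.fderiv_right le_rfl)

theorem IsCompact.exists_bound_fderiv_gradient {s : Set F} (hs : IsCompact s) {f : F → ℝ}
    (hf : ContDiff ℝ 2 f) : ∃ M, 0 ≤ M ∧ ∀ u ∈ s, ‖fderiv ℝ (gradient f) u‖ ≤ M := by
  have hcont : Continuous (fderiv ℝ (gradient f)) :=
    (contDiff_gradient (n := 1) hf).continuous_fderiv one_ne_zero
  obtain ⟨C, hC⟩ := hs.exists_bound_of_continuousOn hcont.continuousOn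
  exact ⟨max C 0, le_max_right _ _, fun u hu => (hC u hu).trans (le_max_left _ _)⟩

end Gradient

theorem pnorm_le_norm_add_norm {N : ℕ} (p : EuclideanSpace ℝ (Fin N) × EuclideanSpace ℝ (Fin N)) :
    pnorm p ≤ ‖p.1‖ + ‖p.2‖ :=
  Real.sqrt_le_iff.mpr ⟨by positivity, by nlinarith [norm_nonneg p.1, norm_nonneg p.2]⟩

section Estimates

variable {N : ℕ} {G : EuclideanSpace ℝ (Fin N) → ℝ} {γ lam M : ℝ} {u v : EuclideanSpace ℝ (Fin N)}

theorem pinner_gradElam_Fvec :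
    pinner (gradElam G lam u v) (Fvec G γ u v) =
      γ * ‖v‖ ^ 2 + lam * ‖gradient G u‖ ^ 2 - lam * ⟪fderiv ℝ (gradient G) u v, v⟫
        + lam * γ * ⟪gradient G u, v⟫ := by
  simp only [pinner, gradElam, Fvec, inner_add_left, inner_add_right, inner_smul_left,
    inner_smul_right, inner_neg_right, real_inner_self_eq_norm_sq, conj_trivial,
    real_inner_comm v (gradient G u)]
  ring

theorem pinner_gradElam_Fvec_ge (hlam : 0 ≤ lam) (hM : ‖fderiv ℝ (gradient G) u‖ ≤ M)
    (hsmall : lam * (2 * M + γ ^ 2) ≤ γ) :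
    γ / 2 * ‖v‖ ^ 2 + lam / 2 * ‖gradient G u‖ ^ 2 ≤ pinner (gradElam G lam u v) (Fvec G γ u v) := by
  have hA : ⟪fderiv ℝ (gradient G) u v, v⟫ ≤ M * ‖v‖ ^ 2 := by
    calc _ ≤ ‖fderiv ℝ (gradient G) u v‖ * ‖v‖ := real_inner_le_norm _ _
      _ ≤ M * ‖v‖ * ‖v‖ := by gcongr; exact ContinuousLinearMap.le_of_opNorm_le _ hM v
      _ = M * ‖v‖ ^ 2 := by ring
  have hg : -(‖gradient G u‖ * ‖v‖) ≤ ⟪gradient G u, v⟫ :=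
    neg_le_of_abs_le (abs_real_inner_le_norm _ _)
  have hM₀ : 0 ≤ M := (norm_nonneg _).trans hM
  have hγ : 0 ≤ γ := hsmall.trans' (by positivity)
  rw [pinner_gradElam_Fvec]
  nlinarith [mul_le_mul_of_nonneg_left hA hlam, mul_le_mul_of_nonneg_left hg (mul_nonneg hlam hγ),
    mul_nonneg hlam (sq_nonneg (‖gradient G u‖ - γ * ‖v‖)),
    mul_le_mul_of_nonneg_right hsmall (sq_nonneg ‖v‖)]

theorem pnorm_gradElam_le (hlam : 0 ≤ lam) (hM : ‖fderiv ℝ (gradient G) u‖ ≤ M) :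
    pnorm (gradElam G lam u v) ≤ (1 + lam * (1 + M)) * (‖gradient G u‖ + ‖v‖) := by
  have hAv := ContinuousLinearMap.le_of_opNorm_le _ hM v
  have hM₀ : 0 ≤ M := (norm_nonneg _).trans hM
  have h₁ : ‖(gradElam G lam u v).1‖ ≤ ‖gradient G u‖ + lam * (M * ‖v‖) := by
    refine (norm_add_le _ _).trans ?_
    rw [norm_smul, Real.norm_of_nonneg hlam]
    gcongr
  have h₂ : ‖(gradElam G lam u v).2‖ ≤ ‖v‖ + lam * ‖gradient G u‖ := by
    refine (norm_add_le _ _).trans ?_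
    rw [norm_smul, Real.norm_of_nonneg hlam]
  refine (pnorm_le_norm_add_norm _).trans ((add_le_add h₁ h₂).trans ?_)
  nlinarith [mul_nonneg (mul_nonneg hlam hM₀) (norm_nonneg (gradient G u)),
    mul_nonneg hlam (norm_nonneg v)]

theorem pnorm_Fvec_le : pnorm (Fvec G γ u v) ≤ (1 + |γ|) * (‖gradient G u‖ + ‖v‖) := by
  have h : ‖(Fvec G γ u v).2‖ ≤ |γ| * ‖v‖ + ‖gradient G u‖ := by
    refine (norm_add_le _ _).trans ?_
    rw [norm_smul, Real.norm_eq_abs]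
  refine (pnorm_le_norm_add_norm _).trans ?_
  rw [show ‖(Fvec G γ u v).1‖ = ‖v‖ from norm_neg v]
  nlinarith [mul_nonneg (abs_nonneg γ) (norm_nonneg (gradient G u))]

theorem mul_pnorm_mul_pnorm_le_pinner (hγ : 0 < γ) (hlam : 0 ≤ lam)
    (hM : ‖fderiv ℝ (gradient G) u‖ ≤ M) (hsmall : lam * (2 * M + γ ^ 2) ≤ γ) :
    min γ lam / (4 * (1 + lam * (1 + M)) * (1 + γ)) *
        (pnorm (gradElam G lam u v) * pnorm (Fvec G γ u v)) ≤
      pinner (gradElam G lam u v) (Fvec G γ u v) := by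
  have hM₀ : 0 ≤ M := (norm_nonneg _).trans hM
  have hP := pnorm_gradElam_le (v := v) hlam hM
  have hQ := pnorm_Fvec_le (G := G) (γ := γ) (u := u) (v := v)
  rw [abs_of_pos hγ] at hQ
  set a := ‖gradient G u‖
  set b := ‖v‖
  set K := 1 + lam * (1 + M)
  have hK : 0 < K := by positivity
  calc _ ≤ min γ lam / (4 * K * (1 + γ)) * (K * (a + b) * ((1 + γ) * (a + b))) := by
        gcongr
        exact Real.sqrt_nonneg _
    _ = min γ lam / 4 * (a + b) ^ 2 := by field_simp
    _ ≤ min γ lam / 4 * (2 * (a ^ 2 + b ^ 2)) := by gcongr; exact add_sq_le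
    _ ≤ γ / 2 * b ^ 2 + lam / 2 * a ^ 2 := by
        nlinarith [min_le_left γ lam, min_le_right γ lam, sq_nonneg a, sq_nonneg b]
    _ ≤ _ := pinner_gradElam_Fvec_ge hlam hM hsmall

theorem Fvec_eq_zero_iff : Fvec G γ u v = 0 ↔ v = 0 ∧ gradient G u = 0 := by
  simp only [Fvec, Prod.ext_iff, Prod.fst_zero, Prod.snd_zero, neg_eq_zero]
  constructor <;> rintro ⟨rfl, h⟩ <;> simpa using h

theorem gradElam_eq_zero_iff_Fvec_eq_zero (hγ : 0 < γ) (hlam : 0 ≤ lam)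
    (hM : ‖fderiv ℝ (gradient G) u‖ ≤ M) (hsmall : lam * (2 * M + γ ^ 2) ≤ γ) :
    gradElam G lam u v = 0 ↔ Fvec G γ u v = 0 := by
  rw [Fvec_eq_zero_iff]
  constructor
  · intro h
    have hv : v = 0 := by
      have key := pinner_gradElam_Fvec_ge (v := v) hlam hM hsmall
      rw [h, pinner, Prod.fst_zero, Prod.snd_zero, inner_zero_left, inner_zero_left,
        add_zero] at key
      have : ‖v‖ ^ 2 ≤ 0 := by nlinarith [sq_nonneg ‖gradient G u‖]
      simpa using this
    subst hv
    simpa [gradElam] using congrArg Prod.fst h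
  · rintro ⟨rfl, hg⟩
    simp [gradElam, hg]

end Estimates

theorem stmt11 {N : ℕ} (G : EuclideanSpace ℝ (Fin N) → ℝ) (hG : ContDiff ℝ 2 G)
    (γ : ℝ) (hγ : 0 < γ) :
    ∀ R > (0:ℝ), ∃ lam₀ > (0:ℝ),
      (∀ lam ∈ Ioo (0:ℝ) lam₀, ∃ α > (0:ℝ), ∀ u v : EuclideanSpace ℝ (Fin N),
        u ∈ closedBall (0 : EuclideanSpace ℝ (Fin N)) R →
          α * (pnorm (gradElam G lam u v) * pnorm (Fvec G γ u v)) ≤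
            pinner (gradElam G lam u v) (Fvec G γ u v)) ∧
      (∀ lam ∈ Ico (0:ℝ) lam₀, ∀ u v : EuclideanSpace ℝ (Fin N),
        u ∈ closedBall (0 : EuclideanSpace ℝ (Fin N)) R →
          (gradElam G lam u v = 0 ↔ Fvec G γ u v = 0)) := by
  intro R _
  obtain ⟨M, hM₀, hM⟩ := (isCompact_closedBall 0 R).exists_bound_fderiv_gradient hG
  have hsmall {lam : ℝ} (hlam : lam < γ / (2 * M + γ ^ 2)) : lam * (2 * M + γ ^ 2) ≤ γ :=
    ((lt_div_iff₀ (by positivity)).mp hlam).le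
  refine ⟨γ / (2 * M + γ ^ 2), by positivity, ?_, ?_⟩
  · rintro lam ⟨hlam, hlam₀⟩
    exact ⟨_, by positivity, fun u v hu =>
      mul_pnorm_mul_pnorm_le_pinner hγ hlam.le (hM u hu) (hsmall hlam₀)⟩
  · rintro lam ⟨hlam, hlam₀⟩ u v hu
    exact gradElam_eq_zero_iff_Fvec_eq_zero hγ hlam (hM u hu) (hsmall hlam₀)
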